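/- arXiv:1410.0611 — 3 statements merged into one kernel-verified Lean document; each statement's English description precedes it below -/
import Mathlib

section
/- Let ν(s) = s^{-1}e^{-s} (the Lévy intensity of a gamma process) and ν*(z) = z^{-1}(1-z)^{φ-1} on (0,1), with φ > 0. Then for all s > 0, ∫₀¹ z^{-1} · (1/Γ(φ)) (s/z)^{φ-1} e^{-s/z} · z^{-1}(1-z)^{φ-1} dz = s^{-1} e^{-s}. That is, mixing Gamma(φ, z) densities against the beta-process intensity ν* recovers the gamma process intensity. -/
/-!
Substitute `z = (1 + x)⁻¹`, which maps `(0, ∞)` onto `(0, 1)` with `|dz/dx| = (1 + x)⁻²`.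
Then `s / z = s + s x` and `1 - z = x / (1 + x)`, so the factors `(1 + x)^(φ - 1)` cancel and
the integrand becomes `Γ(φ)⁻¹ s^(φ - 1) e^(-s) · x^(φ - 1) e^(-s x)`. The remaining integral is
`Γ(φ) / s^φ`, which leaves `s⁻¹ e^(-s)`.
-/

open MeasureTheory Set

lemma image_inv_add_one_Ioi : (fun x : ℝ => (x + 1)⁻¹) '' Ioi 0 = Ioo 0 1 := by
  ext z
  constructor
  · rintro ⟨x, hx : 0 < x, rfl⟩
    exact ⟨by positivity, inv_lt_one_of_one_lt₀ (by linarith)⟩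
  · rintro ⟨hz0, hz1⟩
    exact ⟨z⁻¹ - 1, sub_pos.2 ((one_lt_inv₀ hz0).2 hz1), by simp⟩

theorem integral_Ioo_zero_one_eq_integral_Ioi {E : Type*} [NormedAddCommGroup E]
    [NormedSpace ℝ E] (f : ℝ → E) :
    ∫ z in Ioo (0 : ℝ) 1, f z = ∫ x in Ioi (0 : ℝ), ((x + 1) ^ 2)⁻¹ • f (x + 1)⁻¹ := by
  have hderiv : ∀ x ∈ Ioi (0 : ℝ),
      HasDerivWithinAt (fun x : ℝ => (x + 1)⁻¹) (-1 / (x + 1) ^ 2) (Ioi 0) x := by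
    intro x (hx : 0 < x)
    exact (((hasDerivAt_id' x).add_const 1).inv (by positivity)).hasDerivWithinAt
  have hinj : InjOn (fun x : ℝ => (x + 1)⁻¹) (Ioi 0) :=
    (inv_injective.comp (add_left_injective 1)).injOn
  rw [← image_inv_add_one_Ioi,
    integral_image_eq_integral_abs_deriv_smul measurableSet_Ioi hderiv hinj f]
  refine setIntegral_congr_fun measurableSet_Ioi fun x _ => ?_
  simp [abs_div]

noncomputable def gammaMixtureIntegrand (φ s z : ℝ) : ℝ :=
  z⁻¹ * ((1 / Real.Gamma φ) * (s / z) ^ (φ - 1) * Real.exp (-(s / z))) *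
    (z⁻¹ * (1 - z) ^ (φ - 1))

lemma inv_sq_mul_gammaMixtureIntegrand_inv_add_one {φ s x : ℝ} (hs : 0 ≤ s) (hx : 0 < x) :
    ((x + 1) ^ 2)⁻¹ * gammaMixtureIntegrand φ s (x + 1)⁻¹
      = (1 / Real.Gamma φ * (s ^ (φ - 1) * Real.exp (-s))) *
          (x ^ (φ - 1) * Real.exp (-(s * x))) := by
  have hsz : s / (x + 1)⁻¹ = s * (x + 1) := by field_simp
  have h1z : 1 - (x + 1)⁻¹ = x / (x + 1) := by field_simp; ring
  have hpow : (s * (x + 1)) ^ (φ - 1) * (x / (x + 1)) ^ (φ - 1) = s ^ (φ - 1) * x ^ (φ - 1) := by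
    rw [← Real.mul_rpow (by positivity) (by positivity), ← Real.mul_rpow hs hx.le]
    congr 1
    field_simp
  have hexp : Real.exp (-(s * (x + 1))) = Real.exp (-s) * Real.exp (-(s * x)) := by
    rw [← Real.exp_add]; ring_nf
  have hcancel : ((x + 1) ^ 2)⁻¹ * (x + 1) * (x + 1) = 1 := by field_simp
  rw [gammaMixtureIntegrand, inv_inv, hsz, h1z, hexp]
  calc _ = 1 / Real.Gamma φ * ((s * (x + 1)) ^ (φ - 1) * (x / (x + 1)) ^ (φ - 1)) *
        (Real.exp (-s) * Real.exp (-(s * x))) * (((x + 1) ^ 2)⁻¹ * (x + 1) * (x + 1)) := by ring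
    _ = _ := by rw [hpow, hcancel]; ring

theorem stmt_4 (φ : ℝ) (hφ : 0 < φ) (s : ℝ) (hs : 0 < s) :
    (∫ z in Set.Ioo (0:ℝ) 1,
      z⁻¹ * ((1 / Real.Gamma φ) * (s / z) ^ (φ - 1) * Real.exp (-(s / z))) *
        (z⁻¹ * (1 - z) ^ (φ - 1)))
      = s⁻¹ * Real.exp (-s) := by
  change ∫ z in Ioo 0 1, gammaMixtureIntegrand φ s z = _
  rw [integral_Ioo_zero_one_eq_integral_Ioi,
    setIntegral_congr_fun measurableSet_Ioi fun x (hx : 0 < x) => by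
      rw [smul_eq_mul, inv_sq_mul_gammaMixtureIntegrand_inv_add_one hs.le hx],
    integral_const_mul, Real.integral_rpow_mul_exp_neg_mul_Ioi hφ hs, one_div s,
    Real.inv_rpow hs.le, Real.rpow_sub_one hs.ne']
  field_simp [(Real.Gamma_pos_of_pos hφ).ne']
end

section
/- Let 0 < σ < 1, φ > 0, a > 0, and ν*(z) = (σΓ(φ)/(Γ(φ+σ)Γ(1-σ))) z^{-σ-1}(1-az)^{σ+φ-1} for 0 < z < 1/a. Then for all s > 0, ∫₀^{1/a} z^{-1}·(1/Γ(φ))(s/z)^{φ-1}e^{-s/z} ν*(z) dz = (σ/Γ(1-σ)) s^{-1-σ} e^{-as}, the Lévy intensity of a generalized gamma process. -/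
open MeasureTheory Set Real

/-!
The substitution `z = 1 / (w + a)` maps `(0, ∞)` onto `(0, 1 / a)`, has Jacobian
`(w + a)⁻²`, and turns `1 - a z` into `w / (w + a)` and `s / z` into `s w + a s`. All powers
of `w + a` then cancel, leaving `e^{-a s}` times the Gamma integral
`∫₀^∞ w^{σ+φ-1} e^{-s w} dw = Γ(σ+φ) s^{-σ-φ}`, whose `Γ(σ+φ)` cancels the normalising
constant of `ν*`.
-/

lemma image_inv_add_Ioi {a : ℝ} (ha : 0 < a) :
    (fun w : ℝ => (w + a)⁻¹) '' Ioi 0 = Ioo 0 (1 / a) := by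
  ext z
  constructor
  · rintro ⟨w, hw : 0 < w, rfl⟩
    exact ⟨by positivity, by rw [one_div]; exact inv_strictAnti₀ ha (by linarith)⟩
  · rintro ⟨hz0, hz1⟩
    have : a < z⁻¹ := (lt_inv_comm₀ ha hz0).mpr (by rwa [one_div] at hz1)
    exact ⟨z⁻¹ - a, sub_pos.mpr this, by simp⟩

lemma integral_Ioo_zero_one_div_eq_integral_Ioi_inv_add {E : Type*} [NormedAddCommGroup E]
    [NormedSpace ℝ E] {a : ℝ} (ha : 0 < a) (g : ℝ → E) :
    ∫ z in Ioo 0 (1 / a), g z = ∫ w in Ioi 0, ((w + a) ^ 2)⁻¹ • g (w + a)⁻¹ := by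
  have hderiv : ∀ w ∈ Ioi (0 : ℝ),
      HasDerivWithinAt (fun w => (w + a)⁻¹) (-1 / (w + a) ^ 2) (Ioi 0) w := by
    intro w (hw : 0 < w)
    exact (((hasDerivAt_id' w).add_const a).inv (by positivity)).hasDerivWithinAt
  have hinj : InjOn (fun w : ℝ => (w + a)⁻¹) (Ioi 0) := by
    intro x (hx : 0 < x) y (hy : 0 < y) hxy
    simpa using inv_injective hxy
  rw [← image_inv_add_Ioi ha,
    integral_image_eq_integral_abs_deriv_smul measurableSet_Ioi hderiv hinj g]
  refine setIntegral_congr_fun measurableSet_Ioi fun w (hw : 0 < w) => ?_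
  rw [abs_div, abs_neg, abs_one, abs_of_pos (by positivity), one_div]

lemma inv_add_sq_mul_integrand_inv_add {σ φ a s w : ℝ} (c₁ c₂ : ℝ) (ha : 0 ≤ a) (hs : 0 ≤ s)
    (hw : 0 < w) :
    ((w + a) ^ 2)⁻¹ *
        ((w + a)⁻¹⁻¹ * (c₁ * (s / (w + a)⁻¹) ^ (φ - 1) * exp (-(s / (w + a)⁻¹))) *
          (c₂ * (w + a)⁻¹ ^ (-σ - 1) * (1 - a * (w + a)⁻¹) ^ (σ + φ - 1)))
      = c₁ * c₂ * s ^ (φ - 1) * exp (-(a * s)) * (w ^ (σ + φ - 1) * exp (-(s * w))) := by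
  set b := w + a with hb_def
  have hb : 0 < b := by positivity
  have hsb : s / b⁻¹ = s * b := by rw [div_inv_eq_mul]
  have hab : 1 - a * b⁻¹ = w / b := by field_simp; ring
  have hexp : exp (-(s * b)) = exp (-(a * s)) * exp (-(s * w)) := by
    rw [hb_def, ← exp_add]; ring_nf
  have hpow : b ^ (φ - 1) * b ^ (1 + σ) = b ^ (σ + φ - 1) * b := by
    rw [← rpow_add hb, ← rpow_add_one hb.ne']; ring_nf
  simp only [inv_inv, hsb, hab, hexp, mul_rpow hs hb.le, div_rpow hw.le hb.le,
    inv_rpow hb.le, ← rpow_neg hb.le, neg_sub, sub_neg_eq_add]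
  have : b ^ (σ + φ - 1) ≠ 0 := (rpow_pos_of_pos hb _).ne'
  field_simp
  linear_combination (c₁ * s ^ (φ - 1) * c₂) * hpow

theorem stmt_6_general (σ φ a : ℝ) (hσ : 0 < σ) (hφ : 0 < φ) (ha : 0 < a)
    (s : ℝ) (hs : 0 < s) :
    (∫ z in Set.Ioo (0:ℝ) (1 / a),
      z⁻¹ * ((1 / Real.Gamma φ) * (s / z) ^ (φ - 1) * Real.exp (-(s / z))) *
        ((σ * Real.Gamma φ / (Real.Gamma (φ + σ) * Real.Gamma (1 - σ))) *
          z ^ (-σ - 1) * (1 - a * z) ^ (σ + φ - 1)))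
      = (σ / Real.Gamma (1 - σ)) * s ^ (-1 - σ) * Real.exp (-(a * s)) := by
  rw [integral_Ioo_zero_one_div_eq_integral_Ioi_inv_add ha]
  simp only [smul_eq_mul]
  rw [setIntegral_congr_fun measurableSet_Ioi
      fun w hw => inv_add_sq_mul_integrand_inv_add _ _ ha.le hs.le hw,
    integral_const_mul, integral_rpow_mul_exp_neg_mul_Ioi (by linarith) hs]
  have hΓφ : Gamma φ ≠ 0 := (Gamma_pos_of_pos hφ).ne'
  have hΓφσ : Gamma (φ + σ) ≠ 0 := (Gamma_pos_of_pos (by linarith)).ne'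
  have hspow : s ^ (φ - 1) * (1 / s) ^ (φ + σ) = s ^ (-1 - σ) := by
    rw [one_div, inv_rpow hs.le, ← rpow_neg hs.le, ← rpow_add hs]; ring_nf
  rw [add_comm σ φ, ← hspow]
  field_simp

theorem stmt_6 (σ φ a : ℝ) (hσ : 0 < σ) (hσ1 : σ < 1) (hφ : 0 < φ) (ha : 0 < a)
    (s : ℝ) (hs : 0 < s) :
    (∫ z in Set.Ioo (0:ℝ) (1 / a),
      z⁻¹ * ((1 / Real.Gamma φ) * (s / z) ^ (φ - 1) * Real.exp (-(s / z))) *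
        ((σ * Real.Gamma φ / (Real.Gamma (φ + σ) * Real.Gamma (1 - σ))) *
          z ^ (-σ - 1) * (1 - a * z) ^ (σ + φ - 1)))
      = (σ / Real.Gamma (1 - σ)) * s ^ (-1 - σ) * Real.exp (-(a * s)) :=
  stmt_6_general σ φ a hσ hφ ha s hs
end

section
/- Let φ ≥ 1 be an integer, n ≥ 1 an integer, and z ≥ 0. Then the (n-1)φ-th derivative with respect to λ of λ^{nφ-1}/(1+zλ)^{φ} equals (Γ(nφ)/Γ(φ)) · λ^{φ-1}/(1+zλ)^{nφ}, for λ > 0. -/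
/-!
Write `f m b x = x ^ (m + b) / (1 + z x) ^ (b + 1)`, so that the theorem is the case
`b = φ - 1`, `m = (n - 1) φ`. One differentiation gives
`(f (m + 1) b)' = (m + b + 1) f m b - (b + 1) z f m (b + 1)`, so by induction on `m`
(for all `b` at once) `f m b` has `m`-th derivative `(b + 1)^(m) x ^ b / (1 + z x) ^ (b + 1 + m)`
with `(b + 1)^(m)` the rising factorial: both Pochhammer terms of the induction step become
`(b + 1)^(m + 1)`, and their coefficients combine as `(1 + z x) - z x = 1`.
Finally `Γ(b + 1 + m) / Γ(b + 1) = (b + 1)^(m)`.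
-/

open Filter Topology

section

variable {𝕜 : Type*} [NontriviallyNormedField 𝕜] (z : 𝕜)

theorem hasDerivAt_pow_succ_div_one_add_mul_pow (k b : ℕ) {x : 𝕜} (hx : 1 + z * x ≠ 0) :
    HasDerivAt (fun y => y ^ (k + 1) / (1 + z * y) ^ (b + 1))
      ((k + 1) * (x ^ k / (1 + z * x) ^ (b + 1))
        - (b + 1) * z * (x ^ (k + 1) / (1 + z * x) ^ (b + 1 + 1))) x := by
  have hlin : HasDerivAt (fun y => 1 + z * y) z x := by
    simpa using ((hasDerivAt_id x).const_mul z).const_add 1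
  refine ((hasDerivAt_pow (k + 1) x).fun_div (hlin.fun_pow (b + 1))
    (pow_ne_zero _ hx)).congr_deriv ?_
  simp only [Nat.add_sub_cancel, Nat.cast_add, Nat.cast_one]
  field_simp
  ring

theorem iteratedDeriv_pow_add_div_one_add_mul_pow (m b : ℕ) {x : 𝕜} (hx : 1 + z * x ≠ 0) :
    iteratedDeriv m (fun y => y ^ (m + b) / (1 + z * y) ^ (b + 1)) x
      = (b + 1).ascFactorial m * x ^ b / (1 + z * x) ^ (b + 1 + m) := by
  induction m generalizing b x with
  | zero => simp
  | succ m ih =>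
    have hopen : IsOpen {y : 𝕜 | 1 + z * y ≠ 0} := isOpen_ne_fun (by fun_prop) (by fun_prop)
    have hderiv : deriv (fun y => y ^ (m + 1 + b) / (1 + z * y) ^ (b + 1)) =ᶠ[𝓝 x]
        fun y => (m + b + 1 : 𝕜) * (y ^ (m + b) / (1 + z * y) ^ (b + 1))
          - (b + 1) * z * (y ^ (m + (b + 1)) / (1 + z * y) ^ (b + 1 + 1)) := by
      filter_upwards [hopen.mem_nhds hx] with y hy
      rw [show m + 1 + b = m + b + 1 by ring,
        (hasDerivAt_pow_succ_div_one_add_mul_pow z (m + b) b hy).deriv]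
      push_cast
      ring_nf
    rw [iteratedDeriv_succ', hderiv.iteratedDeriv_eq,
      iteratedDeriv_fun_sub (by fun_prop (disch := exact pow_ne_zero _ hx))
        (by fun_prop (disch := exact pow_ne_zero _ hx)),
      iteratedDeriv_const_mul_field, iteratedDeriv_const_mul_field, ih b hx, ih (b + 1) hx,
      Nat.ascFactorial_succ]
    have hasc : ((b + 1 : ℕ) : 𝕜) * (b + 1 + 1).ascFactorial m
        = (b + 1 + m : ℕ) * (b + 1).ascFactorial m := by
      rw [← Nat.cast_mul, ← Nat.cast_mul, ← Nat.succ_ascFactorial]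
    rw [show b + 1 + 1 + m = b + 1 + m + 1 by ring, show b + 1 + (m + 1) = b + 1 + m + 1 by ring,
      pow_succ (1 + z * x), pow_succ x b]
    have hP : (1 + z * x) ^ (b + 1 + m) ≠ 0 := pow_ne_zero _ hx
    generalize (1 + z * x) ^ (b + 1 + m) = P at hP ⊢
    push_cast at hasc ⊢
    field_simp
    linear_combination (-z * x ^ (b + 1)) * hasc

end

theorem Real.Gamma_natCast_add_div_Gamma_natCast (k m : ℕ) (hk : 0 < k) :
    Real.Gamma ((k + m : ℕ) : ℝ) / Real.Gamma k = k.ascFactorial m := by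
  obtain ⟨j, rfl⟩ : ∃ j, k = j + 1 := ⟨k - 1, by omega⟩
  rw [show j + 1 + m = j + m + 1 by ring, Nat.cast_succ, Nat.cast_succ,
    Real.Gamma_nat_eq_factorial, Real.Gamma_nat_eq_factorial, ← Nat.factorial_mul_ascFactorial]
  push_cast
  field_simp

theorem stmt_12 (φ n : ℕ) (hφ : 1 ≤ φ) (hn : 1 ≤ n) (z : ℝ) (hz : 0 ≤ z)
    (l : ℝ) (hl : 0 < l) :
    iteratedDeriv ((n - 1) * φ) (fun x : ℝ => x ^ (n * φ - 1) / (1 + z * x) ^ φ) l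
      = Real.Gamma ((n * φ : ℕ) : ℝ) / Real.Gamma (φ : ℝ) * l ^ (φ - 1) / (1 + z * l) ^ (n * φ) := by
  obtain ⟨b, rfl⟩ : ∃ b, φ = b + 1 := ⟨φ - 1, by omega⟩
  have hN : n * (b + 1) = b + 1 + (n - 1) * (b + 1) := by
    rw [Nat.sub_one_mul]
    have := Nat.le_mul_of_pos_left (b + 1) hn
    omega
  rw [hN, Real.Gamma_natCast_add_div_Gamma_natCast _ _ b.succ_pos, Nat.add_sub_cancel,
    show b + 1 + (n - 1) * (b + 1) - 1 = (n - 1) * (b + 1) + b by omega,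
    iteratedDeriv_pow_add_div_one_add_mul_pow z _ b (by positivity)]
end
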